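/- arXiv:2002.06014 — 2 statements merged into one kernel-verified Lean document; each statement's English description precedes it below -/
import Mathlib

section
/- In a maximal outerplanar graph of order n ≥ 3, each vertex has at most two neighbors of degree 2. -/
namespace MopPaper

/-- Cyclic successor on `Fin n`. -/
def finNext {n : ℕ} (i : Fin n) : Fin n := ⟨(i.val + 1) % n, Nat.mod_lt _ i.pos⟩

/-- A witness that `G` is a maximal outerplanar graph (mop): a cyclic ordering
`σ` of the vertices such that all Hamiltonian (boundary) edges are present,
no two edges cross with respect to the cyclic order (outerplanarity),
and `G` has exactly `2n - 3` edges (edge-maximality, i.e. a triangulation). -/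
def MopWitness {V : Type*} (G : SimpleGraph V) (n : ℕ) (σ : Fin n ≃ V) : Prop :=
  (∀ i : Fin n, G.Adj (σ i) (σ (finNext i))) ∧
  (∀ a b c d : Fin n, G.Adj (σ a) (σ b) → G.Adj (σ c) (σ d) →
      ¬ (a < c ∧ c < b ∧ b < d)) ∧
  Nat.card G.edgeSet = 2 * n - 3

/-- `G` is a maximal outerplanar graph (on at least 3 vertices). -/
def IsMop {V : Type*} (G : SimpleGraph V) : Prop :=
  ∃ n : ℕ, 3 ≤ n ∧ ∃ σ : Fin n ≃ V, MopWitness G n σ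

/-- `uv` is a Hamiltonian edge of the mop `G`: an edge lying on the (unique)
Hamiltonian cycle of `G`. -/
def IsHamEdge {V : Type*} (G : SimpleGraph V) (u v : V) : Prop :=
  ∃ n : ℕ, 3 ≤ n ∧ ∃ σ : Fin n ≃ V, MopWitness G n σ ∧
    ∃ i : Fin n, (σ i = u ∧ σ (finNext i) = v) ∨ (σ i = v ∧ σ (finNext i) = u)

/-- The closed neighborhood `N[S]` of a set of vertices. -/
def closedNbhd {V : Type*} (G : SimpleGraph V) (S : Set V) : Set V :=
  S ∪ {v | ∃ u ∈ S, G.Adj u v}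

/-- The set of vertices of degree 2. -/
def deg2set {V : Type*} (G : SimpleGraph V) : Set V :=
  {v | (G.neighborSet v).ncard = 2}

/-- `S` is a `K_{1,k+1}`-isolating set of `G`: every vertex of `G - N[S]`
has at most `k` neighbors in `G - N[S]`. -/
def IsKIsolating {V : Type*} (G : SimpleGraph V) (k : ℕ) (S : Set V) : Prop :=
  ∀ v ∈ (closedNbhd G S)ᶜ, (G.neighborSet v ∩ (closedNbhd G S)ᶜ).ncard ≤ k

/-- The `K_{1,k+1}`-isolation number `ι_k(G)`. -/
noncomputable def iotaK {V : Type*} (G : SimpleGraph V) (k : ℕ) : ℕ :=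
  sInf {m | ∃ S : Set V, S.Finite ∧ IsKIsolating G k S ∧ S.ncard = m}

/-- `S` is an `H`-isolating set of `G`: the graph `G - N[S]` contains no
subgraph isomorphic to `H`. -/
def IsIsolating {V W : Type*} (G : SimpleGraph V) (H : SimpleGraph W) (S : Set V) : Prop :=
  ¬ ∃ f : W → ((closedNbhd G S)ᶜ : Set V), Function.Injective f ∧
      ∀ a b : W, H.Adj a b → G.Adj (f a).1 (f b).1

/-- The `H`-isolation number `ι(G, H)`. -/
noncomputable def isolationNumber {V W : Type*} (G : SimpleGraph V) (H : SimpleGraph W) : ℕ :=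
  sInf {m | ∃ S : Set V, S.Finite ∧ IsIsolating G H S ∧ S.ncard = m}

/-- The domination number `γ(G)`. -/
noncomputable def dominationNumber {V : Type*} (G : SimpleGraph V) : ℕ :=
  sInf {m | ∃ S : Set V, S.Finite ∧ closedNbhd G S = Set.univ ∧ S.ncard = m}

/-!
Only the Hamiltonian cycle of the mop matters: a vertex of degree 2 is adjacent to nothing but
its two neighbours on the cycle, so if it is adjacent to `v` it is one of the two cycle
neighbours of `v`.
-/

def finPrev {n : ℕ} (i : Fin n) : Fin n := ⟨(i.val + (n - 1)) % n, Nat.mod_lt _ i.pos⟩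

lemma finNext_finPrev {n : ℕ} (i : Fin n) : finNext (finPrev i) = i := by
  ext
  simp only [finNext, finPrev, Nat.mod_add_mod]
  rw [show i.val + (n - 1) + 1 = i.val + n by have := i.pos; omega, Nat.add_mod_right,
    Nat.mod_eq_of_lt i.isLt]

lemma finPrev_finNext {n : ℕ} (i : Fin n) : finPrev (finNext i) = i := by
  ext
  simp only [finNext, finPrev, Nat.mod_add_mod]
  rw [show i.val + 1 + (n - 1) = i.val + n by have := i.pos; omega, Nat.add_mod_right,
    Nat.mod_eq_of_lt i.isLt]

lemma finPrev_ne_finNext {n : ℕ} (hn : 3 ≤ n) (i : Fin n) : finPrev i ≠ finNext i := by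
  intro h
  have e : (i.val + 1 + (n - 2)) % n = (i.val + 1 + 0) % n := by
    rw [show i.val + 1 + (n - 2) = i.val + (n - 1) by omega]
    exact congrArg Fin.val h
  have hd : n ∣ n - 2 := Nat.dvd_of_mod_eq_zero (Nat.ModEq.add_left_cancel' _ e)
  have := Nat.le_of_dvd (by omega) hd
  omega

section HamiltonianCycle

variable {V : Type*} {G : SimpleGraph V} {n : ℕ} {σ : Fin n ≃ V}

lemma neighborSet_eq_pair_of_mem_deg2set (hn : 3 ≤ n)
    (hcyc : ∀ i : Fin n, G.Adj (σ i) (σ (finNext i))) {j : Fin n} (hj : σ j ∈ deg2set G) :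
    G.neighborSet (σ j) = {σ (finPrev j), σ (finNext j)} := by
  have hdeg : (G.neighborSet (σ j)).ncard = 2 := hj
  have hsub : {σ (finPrev j), σ (finNext j)} ⊆ G.neighborSet (σ j) := by
    rintro x (rfl | rfl)
    · simpa only [finNext_finPrev, SimpleGraph.mem_neighborSet] using (hcyc (finPrev j)).symm
    · exact hcyc j
  symm
  refine Set.eq_of_subset_of_ncard_le hsub ?_ (Set.finite_of_ncard_ne_zero (by omega))
  rw [hdeg, Set.ncard_pair (σ.injective.ne (finPrev_ne_finNext hn j))]

lemma neighborSet_inter_deg2set_subset (hn : 3 ≤ n)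
    (hcyc : ∀ i : Fin n, G.Adj (σ i) (σ (finNext i))) (i : Fin n) :
    G.neighborSet (σ i) ∩ deg2set G ⊆ {σ (finPrev i), σ (finNext i)} := by
  rintro u ⟨hadj, hdeg⟩
  obtain ⟨j, rfl⟩ := σ.surjective u
  have hi : σ i ∈ G.neighborSet (σ j) := hadj.symm
  rw [neighborSet_eq_pair_of_mem_deg2set hn hcyc hdeg] at hi
  rcases hi with hi | hi
  · simp [σ.injective hi, finNext_finPrev]
  · simp [σ.injective hi, finPrev_finNext]

end HamiltonianCycle

/-- in a mop, every vertex has at most two neighbors of degree 2. -/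
theorem deg2_neighbors_le_two {V : Type*} (G : SimpleGraph V) (hG : IsMop G) :
    ∀ v : V, (G.neighborSet v ∩ deg2set G).ncard ≤ 2 := by
  intro v
  obtain ⟨n, hn, σ, hcyc, -, -⟩ := hG
  obtain ⟨i, rfl⟩ := σ.surjective v
  calc (G.neighborSet (σ i) ∩ deg2set G).ncard
      ≤ ({σ (finPrev i), σ (finNext i)} : Set V).ncard :=
        Set.ncard_le_ncard (neighborSet_inter_deg2set_subset hn hcyc i) (Set.toFinite _)
    _ ≤ 2 := Set.ncard_insert_le _ _ |>.trans (by rw [Set.ncard_singleton])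

end MopPaper
end

section
/- If G is a triangulation of a simple polygon of order at least 4, e is a Hamiltonian edge of G (an edge on the polygon boundary), and G' is the graph obtained from G by contracting the edge e, then G' is a triangulation of some simple polygon; equivalently, the edge contraction of a maximal outerplanar graph of order at least 4 along a Hamiltonian edge is again a maximal outerplanar graph. -/
/-!
Rotate the boundary cycle so that `u` and `v` occupy the last two positions. Deleting `u` then
lists the remaining vertices in boundary order with the merged vertex last, and the contraction
map just collapses the last two positions (`p ↦ min p (m - 1)`); since this is monotone and
sends boundary edges to boundary edges, the contraction inherits a Hamiltonian cycle and has
no crossing chords.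

For the edge count, a non-crossing graph on `m` points in convex position has at most
`2m - 3` edges (some vertex has degree at most `2`), which bounds the contraction from above.
Contracting `uv` loses `uv` and one edge per common neighbour of `u` and `v`, and two common
neighbours would give crossing chords, so at most two of the `2(m + 1) - 3` edges are lost.
-/

namespace MopPaper

/-- The edge contraction of `G` along `uv`, realized on the vertex set `V \ {u}`
with `v` playing the role of the merged vertex: the merged vertex is adjacent
exactly to the vertices of `N(u) ∪ N(v)` other than `u`, `v`. -/
def contractEdge {V : Type*} (G : SimpleGraph V) (u v : V) :
    SimpleGraph {x : V // x ≠ u} where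
  Adj a b := a ≠ b ∧
    (G.Adj a.1 b.1 ∨ (a.1 = v ∧ G.Adj u b.1) ∨ (b.1 = v ∧ G.Adj u a.1))
  symm := by
    constructor
    rintro a b ⟨hne, h | ⟨h1, h2⟩ | ⟨h1, h2⟩⟩
    · exact ⟨hne.symm, Or.inl h.symm⟩
    · exact ⟨hne.symm, Or.inr (Or.inr ⟨h1, h2⟩)⟩
    · exact ⟨hne.symm, Or.inr (Or.inl ⟨h1, h2⟩)⟩
  loopless := by constructor; rintro a ⟨hne, -⟩; exact hne rfl

lemma card_edgeSet_le_card_edgeSet_comap_succAbove_add {k : ℕ} (H : SimpleGraph (Fin (k + 1)))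
    (x : Fin (k + 1)) :
    Nat.card H.edgeSet ≤ Nat.card (H.comap x.succAbove).edgeSet + (H.neighborSet x).ncard := by
  classical
  have hiso : H.comap x.succAbove ≃g H.induce {x}ᶜ := ⟨finSuccAboveEquiv x, Iff.rfl⟩
  rw [Nat.card_congr hiso.mapEdgeSet, Nat.card_eq_fintype_card, Nat.card_eq_fintype_card,
    ← SimpleGraph.edgeFinset_card, ← SimpleGraph.edgeFinset_card,
    SimpleGraph.card_edgeFinset_induce_compl_singleton,
    SimpleGraph.card_edgeFinset_deleteIncidenceSet, Set.ncard_eq_toFinset_card',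
    ← SimpleGraph.neighborFinset_def, SimpleGraph.card_neighborFinset_eq_degree]
  omega

def NonCrossing {m : ℕ} (H : SimpleGraph (Fin m)) : Prop :=
  ∀ a b c d : Fin m, H.Adj a b → H.Adj c d → ¬ (a < c ∧ c < b ∧ b < d)

namespace NonCrossing

section

variable {m : ℕ} {H : SimpleGraph (Fin m)}

lemma comap_of_strictMono {k : ℕ} (h : NonCrossing H) {f : Fin k → Fin m} (hf : StrictMono f) :
    NonCrossing (H.comap f) :=
  fun _ _ _ _ hab hcd ⟨hac, hcb, hbd⟩ => h _ _ _ _ hab hcd ⟨hf hac, hf hcb, hf hbd⟩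

/-- A shortest chord `pq` cuts off the vertex `p + 1`, whose only possible neighbours are then
`p` and `p + 2`; without chords the vertex `1` has no neighbours besides `0` and `2`. -/
lemma exists_ncard_neighborSet_le_two (h : NonCrossing H) (hm : 3 ≤ m) :
    ∃ x, (H.neighborSet x).ncard ≤ 2 := by
  let chords : Set (Fin m × Fin m) :=
    {e | H.Adj e.1 e.2 ∧ e.1.val + 2 ≤ e.2.val ∧ e.2.val - e.1.val < m - 1}
  suffices ∃ (x : Fin m) (y z : Fin m), H.neighborSet x ⊆ {y, z} by
    obtain ⟨x, y, z, hsub⟩ := this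
    refine ⟨x, (Set.ncard_le_ncard hsub).trans ?_⟩
    simpa using Set.ncard_insert_le y {z}
  by_cases hne : chords.Nonempty
  · obtain ⟨⟨p, q⟩, hpq_mem, hmin⟩ :=
      Set.exists_min_image chords (fun e => e.2.val - e.1.val) chords.toFinite hne
    obtain ⟨hpq, hlong, hshort⟩ : H.Adj p q ∧ p.val + 2 ≤ q.val ∧ q.val - p.val < m - 1 := hpq_mem
    refine ⟨⟨p + 1, by omega⟩, p, ⟨p + 2, by omega⟩, fun y hy => ?_⟩
    simp only [Set.mem_insert_iff, Set.mem_singleton_iff, Fin.ext_iff]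
    by_contra! hy'
    rcases lt_or_gt_of_ne hy'.1 with hyp | hpy
    · exact h y _ p q hy.symm hpq ⟨hyp, Fin.lt_def.2 (by dsimp only; omega),
        Fin.lt_def.2 (by dsimp only; omega)⟩
    by_cases hyq : q < y
    · exact h p q _ y hpq hy ⟨Fin.lt_def.2 (by dsimp only; omega),
        Fin.lt_def.2 (by dsimp only; omega), hyq⟩
    have hyx : y.val ≠ p.val + 1 := fun e => H.ne_of_adj hy (Fin.ext e.symm)
    have := hmin (⟨p + 1, by omega⟩, y) ⟨hy, by dsimp only; omega, by dsimp only; omega⟩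
    dsimp only at this
    omega
  · refine ⟨⟨1, by omega⟩, ⟨0, by omega⟩, ⟨2, by omega⟩, fun y hy => ?_⟩
    simp only [Set.mem_insert_iff, Set.mem_singleton_iff, Fin.ext_iff]
    by_contra! hy'
    have hyx : y.val ≠ 1 := fun e => H.ne_of_adj hy (Fin.ext e.symm)
    exact hne ⟨(⟨1, by omega⟩, y), hy, by dsimp only; omega, by dsimp only; omega⟩

theorem card_edgeSet_le (h : NonCrossing H) : Nat.card H.edgeSet ≤ 2 * m - 3 := by
  induction m with
  | zero => simp
  | succ k ih =>
    by_cases hk : k ≤ 1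
    · classical
      have hchoose := H.card_edgeFinset_le_card_choose_two
      rw [SimpleGraph.edgeFinset_card, Fintype.card_fin, ← Nat.card_eq_fintype_card] at hchoose
      have hsmall : (k + 1).choose 2 ≤ 2 * (k + 1) - 3 := by interval_cases k <;> decide
      omega
    obtain ⟨x, hx⟩ := h.exists_ncard_neighborSet_le_two (by omega)
    have hdel := ih (h.comap_of_strictMono (Fin.strictMono_succAbove x))
    have := card_edgeSet_le_card_edgeSet_comap_succAbove_add H x
    omega

end

/-- A crossing that wraps around the last vertex is still a crossing after reading the cyclic
order from `0`. -/
lemma comap_add_one {m : ℕ} {H : SimpleGraph (Fin (m + 1))} (h : NonCrossing H) :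
    NonCrossing (H.comap (· + 1)) := by
  intro a b c d hab hcd ⟨hac, hcb, hbd⟩
  have hb : b ≠ Fin.last m := (hbd.trans_le d.le_last).ne
  have hc : c ≠ Fin.last m := (hcb.trans hbd |>.trans_le d.le_last).ne
  have ha : a ≠ Fin.last m := (hac.trans hcb |>.trans hbd |>.trans_le d.le_last).ne
  simp only [SimpleGraph.comap_adj] at hab hcd
  simp only [Fin.lt_def] at hac hcb hbd
  by_cases hd : d = Fin.last m
  · rw [hd, Fin.last_add_one] at hcd
    exact h 0 (c + 1) (a + 1) (b + 1) hcd.symm hab <| by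
      simp only [Fin.lt_def, Fin.val_add_one, ha, hb, hc, if_false, Fin.val_zero]; omega
  · exact h (a + 1) (b + 1) (c + 1) (d + 1) hab hcd <| by
      simp only [Fin.lt_def, Fin.val_add_one, ha, hb, hc, hd, if_false]; omega

lemma comap_add_right {m : ℕ} {H : SimpleGraph (Fin (m + 1))} (h : NonCrossing H)
    (t : Fin (m + 1)) : NonCrossing (H.comap (· + t)) := by
  induction t using Fin.induction generalizing H with
  | zero => convert h using 1; ext; simp
  | succ t ih =>
    convert ih h.comap_add_one using 1
    ext
    simp [← Fin.coeSucc_eq_succ]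

end NonCrossing

lemma val_finNext {n : ℕ} (i : Fin n) :
    (finNext i).val = if i.val + 1 = n then 0 else i.val + 1 := by
  simp only [finNext]
  split_ifs with h
  · rw [h, Nat.mod_self]
  · exact Nat.mod_eq_of_lt (by omega)

lemma finNext_eq_add_one {m : ℕ} (i : Fin (m + 1)) : finNext i = i + 1 :=
  Fin.ext (by simp [finNext, Fin.val_add])

section Rotation

variable {V : Type*} {G : SimpleGraph V} {m : ℕ} {σ : Fin (m + 1) ≃ V}

lemma MopWitness.comp_addRight (hw : MopWitness G (m + 1) σ) (t : Fin (m + 1)) :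
    MopWitness G (m + 1) ((Equiv.addRight t).trans σ) := by
  obtain ⟨hcycle, hcross, hcard⟩ := hw
  refine ⟨fun i => ?_, NonCrossing.comap_add_right (H := G.comap σ) hcross t, hcard⟩
  simpa [finNext_eq_add_one, add_right_comm] using hcycle (i + t)

open Fin.CommRing in
lemma MopWitness.exists_rotation (hw : MopWitness G (m + 1) σ) (i : Fin (m + 1)) :
    ∃ σ' : Fin (m + 1) ≃ V, MopWitness G (m + 1) σ' ∧
      σ' (Fin.last m - 1) = σ i ∧ σ' (Fin.last m) = σ (finNext i) := by
  refine ⟨_, hw.comp_addRight (i + 1 + 1), congrArg σ ?_, congrArg σ ?_⟩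
  · change Fin.last m - 1 + (i + 1 + 1) = i
    linear_combination Fin.last_add_one m
  · change Fin.last m + (i + 1 + 1) = finNext i
    rw [finNext_eq_add_one]
    linear_combination Fin.last_add_one m

end Rotation

lemma Sym2.injOn_map_of_merge {α β : Type*} {f : α → β} {u v : α}
    (hf : ∀ x y, f x = f y → x = y ∨ (x = u ∧ y = v) ∨ (x = v ∧ y = u)) {T : Set (Sym2 α)}
    (hdiag : ∀ e ∈ T, ¬ e.IsDiag) (huv : s(u, v) ∉ T) (hwedge : ∀ w, s(u, w) ∈ T → s(v, w) ∉ T) :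
    Set.InjOn (Sym2.map f) T := by
  intro e he e' he' heq
  induction e using Sym2.ind with | _ a b => ?_
  induction e' using Sym2.ind with | _ x y => ?_
  have hab := hdiag _ he
  have hxy := hdiag _ he'
  simp only [Sym2.map_mk, Sym2.eq_iff, Sym2.mk_isDiag_iff] at heq hab hxy ⊢
  rcases heq with ⟨h1, h2⟩ | ⟨h1, h2⟩ <;>
    rcases hf _ _ h1 with h1 | h1 | h1 <;> rcases hf _ _ h2 with h2 | h2 | h2 <;>
    grind [Sym2.eq_swap]

section Contraction

variable {V : Type*} {G : SimpleGraph V} {u v : V}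

def contractEdgeMap [DecidableEq V] (h : v ≠ u) (x : V) : {x : V // x ≠ u} :=
  if hx : x = u then ⟨v, h⟩ else ⟨x, hx⟩

lemma eq_or_eq_of_contractEdgeMap_eq [DecidableEq V] (h : v ≠ u) {x y : V}
    (hxy : contractEdgeMap h x = contractEdgeMap h y) :
    x = y ∨ (x = u ∧ y = v) ∨ (x = v ∧ y = u) := by
  unfold contractEdgeMap at hxy
  split_ifs at hxy <;> simp_all [Subtype.ext_iff]

lemma contractEdgeMap_of_ne [DecidableEq V] (h : v ≠ u) {x : V} (hx : x ≠ u) :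
    contractEdgeMap h x = ⟨x, hx⟩ :=
  dif_neg hx

lemma contractEdgeMap_self [DecidableEq V] (h : v ≠ u) : contractEdgeMap h u = ⟨v, h⟩ :=
  dif_pos rfl

lemma contractEdge_adj_contractEdgeMap [DecidableEq V] (h : v ≠ u) {x y : V} (hxy : G.Adj x y)
    (hne : contractEdgeMap h x ≠ contractEdgeMap h y) :
    (contractEdge G u v).Adj (contractEdgeMap h x) (contractEdgeMap h y) := by
  refine ⟨hne, ?_⟩
  unfold contractEdgeMap
  split_ifs with hx hy hy
  · exact absurd (hx.trans hy.symm) (G.ne_of_adj hxy)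
  · exact Or.inr (Or.inl ⟨rfl, hx ▸ hxy⟩)
  · exact Or.inr (Or.inr ⟨rfl, hy ▸ hxy.symm⟩)
  · exact Or.inl hxy

lemma exists_adj_of_contractEdge_adj [DecidableEq V] (h : v ≠ u) {a b : {x : V // x ≠ u}}
    (hab : (contractEdge G u v).Adj a b) :
    ∃ x y, G.Adj x y ∧ contractEdgeMap h x = a ∧ contractEdgeMap h y = b := by
  have hmerged : ∀ c : {x : V // x ≠ u}, c.1 = v → ⟨v, h⟩ = c := fun c hc => Subtype.ext hc.symm
  rcases hab.2 with hab | ⟨ha, hub⟩ | ⟨hb, hua⟩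
  · exact ⟨a, b, hab, contractEdgeMap_of_ne h a.2, contractEdgeMap_of_ne h b.2⟩
  · exact ⟨u, b, hub, (contractEdgeMap_self h).trans (hmerged a ha), contractEdgeMap_of_ne h b.2⟩
  · exact ⟨a, u, hua.symm, contractEdgeMap_of_ne h a.2, (contractEdgeMap_self h).trans (hmerged b hb)⟩

theorem ncard_edgeSet_le_ncard_edgeSet_contractEdge_add [Finite V] (huv : G.Adj u v) :
    G.edgeSet.ncard ≤ (contractEdge G u v).edgeSet.ncard + 1 + (G.commonNeighbors u v).ncard := by
  classical
  set lost := insert s(u, v) ((fun w => s(u, w)) '' G.commonNeighbors u v)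
  set T := G.edgeSet \ lost
  have hinj : Set.InjOn (Sym2.map (contractEdgeMap huv.ne')) T := by
    refine Sym2.injOn_map_of_merge (fun x y => eq_or_eq_of_contractEdgeMap_eq huv.ne')
      (fun e he => G.not_isDiag_of_mem_edgeSet he.1) (fun h => h.2 (Set.mem_insert _ _)) ?_
    intro w huw hvw
    exact huw.2 (Set.mem_insert_of_mem _ ⟨w, ⟨huw.1, hvw.1⟩, rfl⟩)
  have hmaps : Sym2.map (contractEdgeMap huv.ne') '' T ⊆ (contractEdge G u v).edgeSet := by
    rintro _ ⟨e, he, rfl⟩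
    induction e using Sym2.ind with | _ x y => ?_
    refine contractEdge_adj_contractEdgeMap huv.ne' he.1 fun hxy => he.2 ?_
    rcases eq_or_eq_of_contractEdgeMap_eq huv.ne' hxy with rfl | ⟨rfl, rfl⟩ | ⟨rfl, rfl⟩
    · exact absurd he.1 (G.irrefl)
    · exact Set.mem_insert _ _
    · exact Sym2.eq_swap ▸ Set.mem_insert _ _
  calc G.edgeSet.ncard ≤ T.ncard + lost.ncard := Set.ncard_le_ncard_sdiff_add_ncard _ _
    _ ≤ T.ncard + ((G.commonNeighbors u v).ncard + 1) := by
        gcongr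
        exact (Set.ncard_insert_le _ _).trans (by gcongr; exact Set.ncard_image_le)
    _ = (Sym2.map (contractEdgeMap huv.ne') '' T).ncard + 1 + (G.commonNeighbors u v).ncard := by
        rw [hinj.ncard_image]; ring
    _ ≤ (contractEdge G u v).edgeSet.ncard + 1 + (G.commonNeighbors u v).ncard := by
        have := Set.ncard_le_ncard hmaps
        omega

end Contraction

lemma Fin.val_le_val_succAbove {n : ℕ} (p : Fin (n + 1)) (i : Fin n) :
    i.val ≤ (p.succAbove i).val := by
  rcases lt_or_ge i.castSucc p with h | h
  · simp [Fin.succAbove_of_castSucc_lt _ _ h]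
  · simp [Fin.succAbove_of_le_castSucc _ _ h]

def eraseOrder {V : Type*} {m : ℕ} (σ : Fin (m + 1) ≃ V) (u : V) : Fin m ≃ {x : V // x ≠ u} :=
  (finSuccAboveEquiv (σ.symm u)).trans (σ.subtypeEquiv fun _ => σ.eq_symm_apply.not)

section LastTwo

variable {V : Type*} {G : SimpleGraph V} {m : ℕ} {σ : Fin (m + 1) ≃ V} {u v : V}

lemma eraseOrder_apply (k : Fin m) : (eraseOrder σ u k : V) = σ ((σ.symm u).succAbove k) := rfl

lemma le_val_iff_of_last_two (huv : u ≠ v) (hu : m - 1 ≤ (σ.symm u).val)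
    (hv : m - 1 ≤ (σ.symm v).val) {p : Fin (m + 1)} : m - 1 ≤ p.val ↔ σ p = u ∨ σ p = v := by
  have hne : (σ.symm u).val ≠ (σ.symm v).val := fun h => huv (σ.symm.injective (Fin.ext h))
  simp only [← σ.eq_symm_apply, Fin.ext_iff]
  constructor
  · intro hp; omega
  · rintro (h | h) <;> omega

lemma contractEdgeMap_eq_eraseOrder_iff [DecidableEq V] (huv : u ≠ v)
    (hu : m - 1 ≤ (σ.symm u).val) (hv : m - 1 ≤ (σ.symm v).val) {p : Fin (m + 1)} {k : Fin m} :
    contractEdgeMap huv.symm (σ p) = eraseOrder σ u k ↔ min p.val (m - 1) = k.val := by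
  have hk := k.isLt
  suffices contractEdgeMap huv.symm (σ p) = eraseOrder σ u ⟨min p.val (m - 1), by omega⟩ by
    rw [this, (eraseOrder σ u).injective.eq_iff, Fin.ext_iff]
  have hlast := le_val_iff_of_last_two huv hu hv (p := p)
  by_cases hp : p.val < m - 1
  · have hpu : σ p ≠ u := fun h => by have := hlast.2 (Or.inl h); omega
    rw [contractEdgeMap_of_ne _ hpu]
    apply Subtype.ext
    rw [eraseOrder_apply, Fin.succAbove_of_castSucc_lt _ _
      (Fin.lt_def.2 (by rw [Fin.val_castSucc]; dsimp only; omega))]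
    exact congrArg σ (Fin.ext (by rw [Fin.val_castSucc]; dsimp only; omega))
  · set q := (σ.symm u).succAbove ⟨min p.val (m - 1), by omega⟩
    have hq : σ q = v := by
      have hqu : σ q ≠ u := fun h => Fin.succAbove_ne _ _ (σ.eq_symm_apply.2 h)
      have := Fin.val_le_val_succAbove (σ.symm u) ⟨min p.val (m - 1), by omega⟩
      exact ((le_val_iff_of_last_two huv hu hv).1 (by dsimp only at this; omega)).resolve_left hqu
    apply Subtype.ext
    rw [eraseOrder_apply, hq]
    rcases hlast.1 (by omega) with h | h
    · rw [h, contractEdgeMap_self]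
    · rw [h, contractEdgeMap_of_ne _ huv.symm]

lemma contractEdge_adj_eraseOrder_finNext (hcycle : ∀ i, G.Adj (σ i) (σ (finNext i)))
    (hm : 2 ≤ m) (huv : u ≠ v) (hu : m - 1 ≤ (σ.symm u).val) (hv : m - 1 ≤ (σ.symm v).val)
    (k : Fin m) : (contractEdge G u v).Adj (eraseOrder σ u k) (eraseOrder σ u (finNext k)) := by
  classical
  have hmap := fun {p} {k} => contractEdgeMap_eq_eraseOrder_iff huv hu hv (p := p) (k := k)
  obtain ⟨p, hp, hq⟩ : ∃ p : Fin (m + 1),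
      min p.val (m - 1) = k.val ∧ min (finNext p).val (m - 1) = (finNext k).val := by
    by_cases hlt : k.val < m - 1
    · refine ⟨k.castSucc, by rw [Fin.val_castSucc]; omega, ?_⟩
      simp only [val_finNext, Fin.val_castSucc]
      split_ifs <;> omega
    · refine ⟨Fin.last m, by rw [Fin.val_last]; omega, ?_⟩
      simp only [val_finNext, Fin.val_last]
      split_ifs <;> omega
  rw [← hmap.2 hp, ← hmap.2 hq]
  refine contractEdge_adj_contractEdgeMap huv.symm (hcycle p) ?_
  rw [hmap.2 hp, hmap.2 hq, (eraseOrder σ u).injective.ne_iff, Ne, Fin.ext_iff, val_finNext]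
  split_ifs <;> omega

lemma nonCrossing_comap_eraseOrder (hcross : NonCrossing (G.comap σ)) (huv : u ≠ v)
    (hu : m - 1 ≤ (σ.symm u).val) (hv : m - 1 ≤ (σ.symm v).val) :
    NonCrossing ((contractEdge G u v).comap (eraseOrder σ u)) := by
  classical
  have hlift : ∀ {a b : Fin m}, (contractEdge G u v).Adj (eraseOrder σ u a) (eraseOrder σ u b) →
      ∃ p q : Fin (m + 1), G.Adj (σ p) (σ q) ∧
        min p.val (m - 1) = a.val ∧ min q.val (m - 1) = b.val := by
    intro a b hab
    obtain ⟨x, y, hxy, hx, hy⟩ := exists_adj_of_contractEdge_adj huv.symm hab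
    refine ⟨σ.symm x, σ.symm y, by simpa using hxy, ?_, ?_⟩
    · exact (contractEdgeMap_eq_eraseOrder_iff huv hu hv).1 (by rwa [σ.apply_symm_apply])
    · exact (contractEdgeMap_eq_eraseOrder_iff huv hu hv).1 (by rwa [σ.apply_symm_apply])
  intro a b c d hab hcd ⟨hac, hcb, hbd⟩
  obtain ⟨pa, pb, hpab, ha, hb⟩ := hlift hab
  obtain ⟨pc, pd, hpcd, hc, hd⟩ := hlift hcd
  simp only [Fin.lt_def] at hac hcb hbd
  exact hcross pa pb pc pd hpab hpcd ⟨Fin.lt_def.2 (by omega), Fin.lt_def.2 (by omega),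
    Fin.lt_def.2 (by omega)⟩

lemma adj_of_last_two (hcycle : ∀ i, G.Adj (σ i) (σ (finNext i))) (huv : u ≠ v)
    (hu : m - 1 ≤ (σ.symm u).val) (hv : m - 1 ≤ (σ.symm v).val) : G.Adj u v := by
  have hedge := hcycle ⟨m - 1, by omega⟩
  rw [show finNext (⟨m - 1, by omega⟩ : Fin (m + 1)) = Fin.last m from
    Fin.ext (by rw [val_finNext, Fin.val_last]; dsimp only; split_ifs <;> omega)] at hedge
  have hlast := fun {p} => le_val_iff_of_last_two huv hu hv (p := p)
  rcases hlast.1 (show m - 1 ≤ (⟨m - 1, by omega⟩ : Fin (m + 1)).val from le_rfl) with h1 | h1 <;>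
    rcases hlast.1 (show m - 1 ≤ (Fin.last m).val by simp) with h2 | h2 <;>
    rw [h1, h2] at hedge
  · exact absurd hedge (G.irrefl)
  · exact hedge
  · exact hedge.symm
  · exact absurd hedge (G.irrefl)

/-- Two common neighbours of the last two vertices would give crossing chords. -/
lemma commonNeighbors_subsingleton_of_last_two (hcross : NonCrossing (G.comap σ)) (huv : u ≠ v)
    (hu : m - 1 ≤ (σ.symm u).val) (hv : m - 1 ≤ (σ.symm v).val) :
    (G.commonNeighbors u v).Subsingleton := by
  have hlast := fun {p} => le_val_iff_of_last_two huv hu hv (p := p)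
  have hadj : ∀ y ∈ G.commonNeighbors u v, ∀ p : Fin (m + 1), m - 1 ≤ p.val →
      (G.comap σ).Adj (σ.symm y) p := by
    intro y ⟨huy, hvy⟩ p hp
    rcases hlast.1 hp with h | h <;> simp [h, huy.symm, hvy.symm]
  have hpos : ∀ y ∈ G.commonNeighbors u v, (σ.symm y).val < m - 1 := by
    intro y ⟨huy, hvy⟩
    by_contra! hy
    rcases hlast.1 hy with h | h <;> simp only [Equiv.apply_symm_apply] at h
    · exact G.ne_of_adj huy h.symm
    · exact G.ne_of_adj hvy h.symm
  intro y hy z hz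
  wlog hyz : σ.symm y < σ.symm z generalizing y z
  · rcases (not_lt.1 hyz).lt_or_eq with h | h
    · exact (this hz hy h).symm
    · exact σ.symm.injective h.symm
  have := hpos z hz
  exact (hcross _ _ _ _ (hadj y hy ⟨m - 1, by omega⟩ le_rfl) (hadj z hz (Fin.last m) (by simp))
    ⟨hyz, Fin.lt_def.2 (show _ < m - 1 by omega), Fin.lt_def.2 (show m - 1 < m by omega)⟩).elim

theorem isMop_contractEdge_of_last_two (hm : 3 ≤ m) (hw : MopWitness G (m + 1) σ) (huv : u ≠ v)
    (hu : m - 1 ≤ (σ.symm u).val) (hv : m - 1 ≤ (σ.symm v).val) :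
    IsMop (contractEdge G u v) := by
  obtain ⟨hcycle, hcross, hcard⟩ := hw
  have hcross : NonCrossing (G.comap σ) := hcross
  have hτcross := nonCrossing_comap_eraseOrder hcross huv hu hv
  refine ⟨m, hm, eraseOrder σ u,
    contractEdge_adj_eraseOrder_finNext hcycle (by omega) huv hu hv, hτcross, le_antisymm ?_ ?_⟩
  · rw [← Nat.card_congr (SimpleGraph.Iso.comap (eraseOrder σ u) _).mapEdgeSet]
    exact hτcross.card_edgeSet_le
  · have : Finite V := Finite.of_equiv _ σ
    have hlower :=
      ncard_edgeSet_le_ncard_edgeSet_contractEdge_add (adj_of_last_two hcycle huv hu hv)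
    have hcommon := (Set.ncard_le_one (Set.toFinite _)).2
      (commonNeighbors_subsingleton_of_last_two hcross huv hu hv)
    rw [Nat.card_coe_set_eq] at hcard ⊢
    omega

end LastTwo

theorem contract_hamEdge_isMop_general {V : Type*} (G : SimpleGraph V)
    (hn : 4 ≤ Nat.card V) (u v : V) (hham : IsHamEdge G u v) :
    IsMop (contractEdge G u v) := by
  obtain ⟨n, -, σ, hw, i, hi⟩ := hham
  have hcard : Nat.card V = n := by rw [Nat.card_congr σ.symm, Nat.card_fin]
  obtain ⟨m, rfl⟩ : ∃ m, n = m + 1 := ⟨n - 1, by omega⟩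
  have hm : 3 ≤ m := by omega
  obtain ⟨τ, hτ, hi₁, hi₂⟩ := hw.exists_rotation i
  have hne : σ i ≠ σ (finNext i) := by
    refine σ.injective.ne fun h => ?_
    have := congrArg Fin.val h
    rw [val_finNext] at this
    split_ifs at this <;> omega
  have hpos₁ : m - 1 ≤ (τ.symm (σ i)).val := by
    rw [← hi₁, Equiv.symm_apply_apply, Fin.coe_sub_one]
    split_ifs <;> simp
  have hpos₂ : m - 1 ≤ (τ.symm (σ (finNext i))).val := by
    rw [← hi₂, Equiv.symm_apply_apply, Fin.val_last]
    omega
  rcases hi with ⟨rfl, rfl⟩ | ⟨rfl, rfl⟩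
  · exact isMop_contractEdge_of_last_two hm hτ hne hpos₁ hpos₂
  · exact isMop_contractEdge_of_last_two hm hτ hne.symm hpos₂ hpos₁

/-- contracting a Hamiltonian edge of a mop of order at least 4
yields a mop. -/
theorem contract_hamEdge_isMop {V : Type*} (G : SimpleGraph V) (hG : IsMop G)
    (hn : 4 ≤ Nat.card V) (u v : V) (hham : IsHamEdge G u v) :
    IsMop (contractEdge G u v) :=
  contract_hamEdge_isMop_general G hn u v hham

end MopPaper
end
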